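/- For 1 ≤ j ≤ d, the operator Ĥ_{j,d+1} = x_j(1−|x|)∂_{x_j}² + [(γ_j+1)(1−|x|) − (γ_{d+1}+1)x_j]∂_{x_j} commutes with the Appell–Lauricella operator M_d^γ, where |x| = x₁+⋯+x_d. -/

import Mathlib

/-- The partial derivative `∂f/∂xᵢ` at `x`. -/
noncomputable def pd {m : ℕ} (i : Fin m) (f : (Fin m → ℝ) → ℝ) (x : Fin m → ℝ) : ℝ :=
  deriv (fun t : ℝ => f (Function.update x i t)) (x i)

/-- The Appell–Lauricella operator `M_d^γ` in `d+1` variables, with parameters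
`γ : Fin (d+2) → ℝ` (so `γ k` is the paper's `γ_{k+1}`). -/
noncomputable def Mop {d : ℕ} (γ : Fin (d + 2) → ℝ) (f : (Fin (d + 1) → ℝ) → ℝ)
    (x : Fin (d + 1) → ℝ) : ℝ :=
  ∑ i, (1 - x i) * x i * pd i (pd i f) x
    - 2 * ∑ i : Fin (d + 1), ∑ l ∈ Finset.Ioi i, x i * x l * pd i (pd l f) x
    + ∑ i, ((γ i.castSucc + 1) - ((∑ k, γ k) + ((d : ℝ) + 1) + 1) * x i) * pd i f x

/-- The operator
`Ĥ_{j,d+1} = x_j(1−|x|)∂_{x_j}² + [(γ_j+1)(1−|x|) − (γ_{d+1}+1)x_j]∂_{x_j}`,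
where `|x| = x₁+⋯+x_d`. -/
noncomputable def HopLast {d : ℕ} (γ : Fin (d + 2) → ℝ) (j : Fin (d + 1))
    (f : (Fin (d + 1) → ℝ) → ℝ) (x : Fin (d + 1) → ℝ) : ℝ :=
  x j * (1 - ∑ k, x k) * pd j (pd j f) x
    + ((γ j.castSucc + 1) * (1 - ∑ k, x k) - (γ (Fin.last (d + 1)) + 1) * x j) * pd j f x

namespace PDtool


variable {m : ℕ}

lemma update_eq_line (x : Fin m → ℝ) (i : Fin m) (t : ℝ) :
    Function.update x i t = x + (t - x i) • (Pi.single i 1 : Fin m → ℝ) := by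
  funext k
  by_cases h : k = i
  · subst h; simp [Function.update_self]
  · simp [Function.update_of_ne h, Pi.single_apply, h]

lemma hasDerivAt_line (x : Fin m → ℝ) (i : Fin m) (t : ℝ) :
    HasDerivAt (fun t : ℝ => Function.update x i t) ((Pi.single i 1 : Fin m → ℝ)) t := by
  have h : (fun t : ℝ => Function.update x i t)
      = fun t : ℝ => x + (t - x i) • (Pi.single i 1 : Fin m → ℝ) := by
    funext t; exact update_eq_line x i t
  rw [h]
  have h1 : HasDerivAt (fun t : ℝ => t - x i) 1 t := (hasDerivAt_id t).sub_const _
  have h2 := h1.smul_const (Pi.single i 1 : Fin m → ℝ)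
  simpa using h2.const_add x

lemma hasDerivAt_pd {f : (Fin m → ℝ) → ℝ} {x : Fin m → ℝ} (i : Fin m)
    (hf : DifferentiableAt ℝ f x) :
    HasDerivAt (fun t : ℝ => f (Function.update x i t))
      (fderiv ℝ f x ((Pi.single i 1 : Fin m → ℝ))) (x i) := by
  have hg := hasDerivAt_line x i (x i)
  have hfx : HasFDerivAt f (fderiv ℝ f x) (Function.update x i (x i)) := by
    rw [Function.update_eq_self]; exact hf.hasFDerivAt
  exact hfx.comp_hasDerivAt (x i) hg

lemma pd_eq_fderiv {f : (Fin m → ℝ) → ℝ} {x : Fin m → ℝ} (i : Fin m)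
    (hf : DifferentiableAt ℝ f x) :
    pd i f x = fderiv ℝ f x ((Pi.single i 1 : Fin m → ℝ)) := (hasDerivAt_pd i hf).deriv

lemma contDiff_pd {f : (Fin m → ℝ) → ℝ} (i : Fin m) (hf : ContDiff ℝ (⊤ : ℕ∞) f) :
    ContDiff ℝ (⊤ : ℕ∞) (pd i f) := by
  have h : pd i f = fun x => fderiv ℝ f x ((Pi.single i 1 : Fin m → ℝ)) := by
    funext x; exact pd_eq_fderiv i (hf.differentiable (by simp) x)
  rw [h]
  exact (hf.fderiv_right (by simp)).clm_apply contDiff_const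

lemma pd_comm {f : (Fin m → ℝ) → ℝ} (i l : Fin m) (hf : ContDiff ℝ (⊤ : ℕ∞) f) (x : Fin m → ℝ) :
    pd i (pd l f) x = pd l (pd i f) x := by
  have hsym : IsSymmSndFDerivAt ℝ f x := hf.contDiffAt.isSymmSndFDerivAt (by
    rw [minSmoothness_of_isRCLikeNormedField]; exact WithTop.coe_le_coe.mpr (le_top : (2 : ℕ∞) ≤ ⊤))
  have hd : ∀ (k : Fin m) (y : Fin m → ℝ), pd k f y = fderiv ℝ f y ((Pi.single k 1 : Fin m → ℝ)) := by
    intro k y; exact pd_eq_fderiv k (hf.differentiable (by simp) y)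
  have hfd : DifferentiableAt ℝ (fderiv ℝ f) x :=
    ((hf.fderiv_right (m := (⊤ : ℕ∞)) ((by simp))).differentiable (by simp) x)
  have key : ∀ (a b : Fin m), pd a (pd b f) x
      = fderiv ℝ (fderiv ℝ f) x ((Pi.single a 1 : Fin m → ℝ)) ((Pi.single b 1 : Fin m → ℝ)) := by
    intro a b
    have h1 : pd b f = fun y => fderiv ℝ f y ((Pi.single b 1 : Fin m → ℝ)) := funext (hd b)
    have hdiff : DifferentiableAt ℝ (fun y => fderiv ℝ f y ((Pi.single b 1 : Fin m → ℝ))) x :=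
      hfd.clm_apply (differentiableAt_const _)
    rw [h1, pd_eq_fderiv a hdiff]
    rw [fderiv_clm_apply hfd (differentiableAt_const _)]
    simp
  rw [key i l, key l i]
  exact hsym _ _

end PDtool

namespace PDtool
variable {m : ℕ}

lemma diffAt_line {f : (Fin m → ℝ) → ℝ} {x : Fin m → ℝ} (i : Fin m)
    (hf : DifferentiableAt ℝ f x) :
    DifferentiableAt ℝ (fun t => f (Function.update x i t)) (x i) :=
  (hasDerivAt_pd i hf).differentiableAt

lemma pd_add {f g : (Fin m → ℝ) → ℝ} (i : Fin m) (x : Fin m → ℝ)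
    (hf : DifferentiableAt ℝ f x) (hg : DifferentiableAt ℝ g x) :
    pd i (fun y => f y + g y) x = pd i f x + pd i g x := by
  unfold pd
  exact deriv_add (diffAt_line i hf) (diffAt_line i hg)

lemma pd_sub {f g : (Fin m → ℝ) → ℝ} (i : Fin m) (x : Fin m → ℝ)
    (hf : DifferentiableAt ℝ f x) (hg : DifferentiableAt ℝ g x) :
    pd i (fun y => f y - g y) x = pd i f x - pd i g x := by
  unfold pd
  exact deriv_sub (diffAt_line i hf) (diffAt_line i hg)

lemma pd_mul {f g : (Fin m → ℝ) → ℝ} (i : Fin m) (x : Fin m → ℝ)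
    (hf : DifferentiableAt ℝ f x) (hg : DifferentiableAt ℝ g x) :
    pd i (fun y => f y * g y) x = pd i f x * g x + f x * pd i g x := by
  unfold pd
  have := deriv_fun_mul (diffAt_line i hf) (diffAt_line i hg)
  simpa [Function.update_eq_self] using this

lemma pd_sum {α : Type*} (s : Finset α) (F : α → (Fin m → ℝ) → ℝ) (i : Fin m) (x : Fin m → ℝ)
    (hF : ∀ a ∈ s, DifferentiableAt ℝ (F a) x) :
    pd i (fun y => ∑ a ∈ s, F a y) x = ∑ a ∈ s, pd i (F a) x := by
  unfold pd
  exact deriv_fun_sum (fun a ha => diffAt_line i (hF a ha))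

lemma pd_const (i : Fin m) (x : Fin m → ℝ) (c : ℝ) : pd i (fun _ => c) x = 0 := by
  unfold pd; exact deriv_const _ _

lemma pd_coord (i l : Fin m) (x : Fin m → ℝ) :
    pd i (fun y => y l) x = if l = i then 1 else 0 := by
  unfold pd
  by_cases h : l = i
  · subst h; simp [Function.update_self]
  · simp only [Function.update_of_ne h]
    simp [h]

lemma pd_coordsum (i : Fin m) (x : Fin m → ℝ) :
    pd i (fun y => ∑ k, y k) x = 1 := by
  rw [pd_sum Finset.univ (fun k => fun y => y k) i x
    (fun a _ => (differentiable_pi.mp differentiable_id a x))]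
  simp [pd_coord]

lemma contDiff_coord (l : Fin m) : ContDiff ℝ (⊤ : ℕ∞) (fun y : Fin m → ℝ => y l) :=
  contDiff_pi.mp contDiff_id l

end PDtool

namespace PDtool
variable {m : ℕ}

lemma pd_comm_fun {g : (Fin m → ℝ) → ℝ} (i l : Fin m) (hg : ContDiff ℝ (⊤ : ℕ∞) g) :
    pd i (pd l g) = pd l (pd i g) := funext (pd_comm i l hg)

lemma pd_comm3 {g : (Fin m → ℝ) → ℝ} (i k l : Fin m) (hg : ContDiff ℝ (⊤ : ℕ∞) g)
    (x : Fin m → ℝ) :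
    pd i (pd k (pd l g)) x = pd k (pd l (pd i g)) x := by
  rw [pd_comm i k (contDiff_pd l hg), pd_comm_fun i l hg]

/-- symmetrized Appell–Lauricella operator -/
noncomputable def Mgen (A : Fin m → ℝ) (c : ℝ) (g : (Fin m → ℝ) → ℝ)
    (x : Fin m → ℝ) : ℝ :=
  (∑ k, x k * pd k (pd k g) x) - (∑ k, ∑ l, x k * x l * pd k (pd l g) x)
    + ∑ k, (A k - c * x k) * pd k g x

lemma smooth_T1 {g : (Fin m → ℝ) → ℝ} (hg : ContDiff ℝ (⊤ : ℕ∞) g) :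
    ContDiff ℝ (⊤ : ℕ∞) (fun y => ∑ k, y k * pd k (pd k g) y) :=
  ContDiff.sum fun k _ => (contDiff_coord k).mul (contDiff_pd k (contDiff_pd k hg))

lemma smooth_T2 {g : (Fin m → ℝ) → ℝ} (hg : ContDiff ℝ (⊤ : ℕ∞) g) :
    ContDiff ℝ (⊤ : ℕ∞) (fun y => ∑ k, ∑ l, y k * y l * pd k (pd l g) y) :=
  ContDiff.sum fun k _ => ContDiff.sum fun l _ =>
    ((contDiff_coord k).mul (contDiff_coord l)).mul (contDiff_pd k (contDiff_pd l hg))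

lemma smooth_T3 (A : Fin m → ℝ) (c : ℝ) {g : (Fin m → ℝ) → ℝ} (hg : ContDiff ℝ (⊤ : ℕ∞) g) :
    ContDiff ℝ (⊤ : ℕ∞) (fun y => ∑ k, (A k - c * y k) * pd k g y) :=
  ContDiff.sum fun k _ =>
    (contDiff_const.sub (contDiff_const.mul (contDiff_coord k))).mul (contDiff_pd k hg)

lemma smooth_Mgen (A : Fin m → ℝ) (c : ℝ) {g : (Fin m → ℝ) → ℝ} (hg : ContDiff ℝ (⊤ : ℕ∞) g) :
    ContDiff ℝ (⊤ : ℕ∞) (Mgen A c g) := by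
  show ContDiff ℝ (⊤ : ℕ∞) (fun x => _)
  exact ((smooth_T1 hg).sub (smooth_T2 hg)).add (smooth_T3 A c hg)

lemma pdT1 {g : (Fin m → ℝ) → ℝ} (hg : ContDiff ℝ (⊤ : ℕ∞) g) (i : Fin m) (x : Fin m → ℝ) :
    pd i (fun y => ∑ k, y k * pd k (pd k g) y) x
      = pd i (pd i g) x + ∑ k, x k * pd k (pd k (pd i g)) x := by
  rw [pd_sum Finset.univ _ i x (fun k _ =>
    (((contDiff_coord k).mul (contDiff_pd k (contDiff_pd k hg))).differentiable (by simp) x))]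
  have h : ∀ k : Fin m, pd i (fun y => y k * pd k (pd k g) y) x
      = (if k = i then 1 else 0) * pd k (pd k g) x + x k * pd k (pd k (pd i g)) x := by
    intro k
    rw [pd_mul i x ((contDiff_coord k).differentiable (by simp) x)
      ((contDiff_pd k (contDiff_pd k hg)).differentiable (by simp) x),
      pd_coord, pd_comm3 i k k hg]
  simp only [h]
  rw [Finset.sum_add_distrib]
  congr 1
  simp

lemma pdT2 {g : (Fin m → ℝ) → ℝ} (hg : ContDiff ℝ (⊤ : ℕ∞) g) (i : Fin m) (x : Fin m → ℝ) :
    pd i (fun y => ∑ k, ∑ l, y k * y l * pd k (pd l g) y) x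
      = 2 * (∑ k, x k * pd k (pd i g) x)
        + ∑ k, ∑ l, x k * x l * pd k (pd l (pd i g)) x := by
  have hsm : ∀ (k l : Fin m), ContDiff ℝ (⊤ : ℕ∞) (fun y => y k * y l * pd k (pd l g) y) :=
    fun k l => ((contDiff_coord k).mul (contDiff_coord l)).mul
      (contDiff_pd k (contDiff_pd l hg))
  rw [pd_sum Finset.univ _ i x (fun k _ => ((ContDiff.sum (fun l _ => hsm k l)).differentiable
    (by simp) x))]
  have h : ∀ k : Fin m, pd i (fun y => ∑ l, y k * y l * pd k (pd l g) y) x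
      = ∑ l, ((if k = i then 1 else 0) * (x l * pd k (pd l g) x)
          + (if l = i then 1 else 0) * (x k * pd k (pd l g) x)
          + x k * x l * pd k (pd l (pd i g)) x) := by
    intro k
    rw [pd_sum Finset.univ _ i x (fun l _ => ((hsm k l).differentiable (by simp) x))]
    refine Finset.sum_congr rfl (fun l _ => ?_)
    rw [pd_mul i x (((contDiff_coord k).mul (contDiff_coord l)).differentiable (by simp) x)
      ((contDiff_pd k (contDiff_pd l hg)).differentiable (by simp) x),
      pd_mul i x ((contDiff_coord k).differentiable (by simp) x)
      ((contDiff_coord l).differentiable (by simp) x), pd_coord, pd_coord,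
      pd_comm3 i k l hg]
    ring
  simp only [h, Finset.sum_add_distrib]
  have h1 : (∑ k : Fin m, ∑ l, (if k = i then 1 else 0) * (x l * pd k (pd l g) x))
      = ∑ k, x k * pd k (pd i g) x := by
    have : ∀ k : Fin m, (∑ l, (if k = i then 1 else 0) * (x l * pd k (pd l g) x))
        = (if k = i then (∑ l, x l * pd k (pd l g) x) else 0) := by
      intro k; by_cases hk : k = i <;> simp [hk]
    simp only [this, Finset.sum_ite_eq', Finset.mem_univ, if_true]
    exact Finset.sum_congr rfl (fun l _ => by rw [pd_comm i l hg])
  have h2 : (∑ k : Fin m, ∑ l, (if l = i then 1 else 0) * (x k * pd k (pd l g) x))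
      = ∑ k, x k * pd k (pd i g) x := by
    refine Finset.sum_congr rfl (fun k _ => ?_)
    simp only [ite_mul, one_mul, zero_mul, Finset.sum_ite_eq', Finset.mem_univ, if_true]
  rw [h1, h2]; ring

lemma pdT3 (A : Fin m → ℝ) (c : ℝ) {g : (Fin m → ℝ) → ℝ} (hg : ContDiff ℝ (⊤ : ℕ∞) g)
    (i : Fin m) (x : Fin m → ℝ) :
    pd i (fun y => ∑ k, (A k - c * y k) * pd k g y) x
      = -c * pd i g x + ∑ k, (A k - c * x k) * pd k (pd i g) x := by
  have hsm : ∀ k : Fin m, ContDiff ℝ (⊤ : ℕ∞) (fun y : Fin m → ℝ => A k - c * y k) :=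
    fun k => contDiff_const.sub (contDiff_const.mul (contDiff_coord k))
  rw [pd_sum Finset.univ _ i x (fun k _ =>
    (((hsm k).mul (contDiff_pd k hg)).differentiable (by simp) x))]
  have h : ∀ k : Fin m, pd i (fun y => (A k - c * y k) * pd k g y) x
      = (if k = i then 1 else 0) * (-c * pd k g x) + (A k - c * x k) * pd k (pd i g) x := by
    intro k
    rw [pd_mul i x ((hsm k).differentiable (by simp) x) ((contDiff_pd k hg).differentiable (by simp) x),
      pd_sub i x (differentiableAt_const _) ((contDiff_const.mul (contDiff_coord k)).differentiable
        (by simp) x),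
      pd_mul i x (differentiableAt_const _) ((contDiff_coord k).differentiable (by simp) x),
      pd_coord, pd_comm k i hg]
    simp only [pd_const]
    ring
  simp only [h, Finset.sum_add_distrib]
  congr 1
  simp only [ite_mul, one_mul, zero_mul, Finset.sum_ite_eq', Finset.mem_univ, if_true]

lemma pd_Mgen (A : Fin m → ℝ) (c : ℝ) {g : (Fin m → ℝ) → ℝ} (hg : ContDiff ℝ (⊤ : ℕ∞) g)
    (i : Fin m) (x : Fin m → ℝ) :
    pd i (Mgen A c g) x
      = Mgen A c (pd i g) x + pd i (pd i g) x - 2 * (∑ k, x k * pd k (pd i g) x)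
        - c * pd i g x := by
  have e : Mgen A c g = fun y => ((∑ k, y k * pd k (pd k g) y)
      - (∑ k, ∑ l, y k * y l * pd k (pd l g) y))
      + ∑ k, (A k - c * y k) * pd k g y := rfl
  rw [e, pd_add i x (((smooth_T1 hg).sub (smooth_T2 hg)).differentiable (by simp) x)
    ((smooth_T3 A c hg).differentiable (by simp) x),
    pd_sub i x ((smooth_T1 hg).differentiable (by simp) x) ((smooth_T2 hg).differentiable (by simp) x),
    pdT1 hg i x, pdT2 hg i x, pdT3 A c hg i x]
  unfold Mgen
  ring


lemma pd_const_mul (i : Fin m) (x : Fin m → ℝ) (c : ℝ) {g : (Fin m → ℝ) → ℝ}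
    (hg : DifferentiableAt ℝ g x) :
    pd i (fun y => c * g y) x = c * pd i g x := by
  rw [pd_mul i x (differentiableAt_const c) hg]
  simp [pd_const]

lemma pdS {g : (Fin m → ℝ) → ℝ} (hg : ContDiff ℝ (⊤ : ℕ∞) g) (i : Fin m) (x : Fin m → ℝ) :
    pd i (fun y => ∑ k, y k * pd k g y) x = pd i g x + ∑ k, x k * pd k (pd i g) x := by
  rw [pd_sum Finset.univ _ i x (fun k _ =>
    (((contDiff_coord k).mul (contDiff_pd k hg)).differentiable (by simp) x))]
  have h : ∀ k : Fin m, pd i (fun y => y k * pd k g y) x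
      = (if k = i then 1 else 0) * pd k g x + x k * pd k (pd i g) x := by
    intro k
    rw [pd_mul i x ((contDiff_coord k).differentiable (by simp) x)
      ((contDiff_pd k hg).differentiable (by simp) x), pd_coord, pd_comm i k hg]
  simp only [h]
  rw [Finset.sum_add_distrib]
  congr 1
  simp

lemma sum_delta_mul (w : Fin m → ℝ) (j : Fin m) :
    ∑ i, (if j = i then 1 else 0) * w i = w j := by simp

section Spec
variable {d : ℕ}

noncomputable def Pf (j : Fin (d+1)) : (Fin (d+1) → ℝ) → ℝ :=
  fun y => y j * (1 - ∑ k, y k)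

noncomputable def Qf (γ : Fin (d+2) → ℝ) (j : Fin (d+1)) : (Fin (d+1) → ℝ) → ℝ :=
  fun y => (γ j.castSucc + 1) * (1 - ∑ k, y k) - (γ (Fin.last (d+1)) + 1) * y j

variable (γ : Fin (d+2) → ℝ) (j : Fin (d+1))

lemma smooth_one_sub_sum : ContDiff ℝ (⊤ : ℕ∞) (fun y : Fin (d+1) → ℝ => 1 - ∑ k, y k) :=
  contDiff_const.sub (ContDiff.sum fun k _ => contDiff_coord k)

lemma smooth_P : ContDiff ℝ (⊤ : ℕ∞) (Pf j) := (contDiff_coord j).mul (smooth_one_sub_sum)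

lemma smooth_Q : ContDiff ℝ (⊤ : ℕ∞) (Qf γ j) :=
  (contDiff_const.mul (smooth_one_sub_sum)).sub (contDiff_const.mul (contDiff_coord j))

lemma Hop_eq (f : (Fin (d+1) → ℝ) → ℝ) :
    HopLast γ j f = fun x => Pf j x * pd j (pd j f) x + Qf γ j x * pd j f x := rfl

lemma smooth_H {f : (Fin (d+1) → ℝ) → ℝ} (hf : ContDiff ℝ (⊤ : ℕ∞) f) :
    ContDiff ℝ (⊤ : ℕ∞) (HopLast γ j f) := by
  rw [Hop_eq]
  exact ((smooth_P j).mul (contDiff_pd j (contDiff_pd j hf))).add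
    ((smooth_Q γ j).mul (contDiff_pd j hf))

lemma pd_one_sub_sum (i : Fin (d+1)) (x : Fin (d+1) → ℝ) :
    pd i (fun y : Fin (d+1) → ℝ => 1 - ∑ k, y k) x = -1 := by
  rw [pd_sub i x (differentiableAt_const _)
    ((ContDiff.sum fun k _ => contDiff_coord k : ContDiff ℝ (⊤ : ℕ∞) _).differentiable (by simp) x),
    pd_const, pd_coordsum]
  norm_num

lemma pd_P (i : Fin (d+1)) (x : Fin (d+1) → ℝ) :
    pd i (Pf j) x = (if j = i then 1 else 0) * (1 - ∑ k, x k) - x j := by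
  unfold Pf
  rw [pd_mul i x ((contDiff_coord j).differentiable (by simp) x)
    ((smooth_one_sub_sum).differentiable (by simp) x), pd_coord, pd_one_sub_sum]
  ring

lemma pd_Q (i : Fin (d+1)) (x : Fin (d+1) → ℝ) :
    pd i (Qf γ j) x = -(γ j.castSucc + 1)
      - (γ (Fin.last (d+1)) + 1) * (if j = i then 1 else 0) := by
  unfold Qf
  rw [pd_sub i x ((contDiff_const.mul (smooth_one_sub_sum)).differentiable (by simp) x)
    ((contDiff_const.mul (contDiff_coord j)).differentiable (by simp) x),
    pd_mul i x (differentiableAt_const _) ((smooth_one_sub_sum).differentiable (by simp) x),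
    pd_mul i x (differentiableAt_const _) ((contDiff_coord j).differentiable (by simp) x),
    pd_one_sub_sum, pd_coord]
  simp only [pd_const]
  ring

lemma pd_H {f : (Fin (d+1) → ℝ) → ℝ} (hf : ContDiff ℝ (⊤ : ℕ∞) f) (i : Fin (d+1))
    (x : Fin (d+1) → ℝ) :
    pd i (HopLast γ j f) x
      = ((if j = i then 1 else 0) * (1 - ∑ k, x k) - x j) * pd j (pd j f) x
        + Pf j x * pd i (pd j (pd j f)) x
        + (-(γ j.castSucc + 1) - (γ (Fin.last (d+1)) + 1) * (if j = i then 1 else 0))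
            * pd j f x
        + Qf γ j x * pd i (pd j f) x := by
  rw [Hop_eq,
    pd_add i x (((smooth_P j).mul (contDiff_pd j (contDiff_pd j hf))).differentiable (by simp) x)
      (((smooth_Q γ j).mul (contDiff_pd j hf)).differentiable (by simp) x),
    pd_mul i x ((smooth_P j).differentiable (by simp) x)
      ((contDiff_pd j (contDiff_pd j hf)).differentiable (by simp) x),
    pd_mul i x ((smooth_Q γ j).differentiable (by simp) x)
      ((contDiff_pd j hf).differentiable (by simp) x),
    pd_P, pd_Q]
  ring

end Spec
end PDtool

namespace PDtool
section Spec2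
variable {d : ℕ} (γ : Fin (d+2) → ℝ) (j : Fin (d+1))

lemma smooth_C1 (l : Fin (d+1)) :
    ContDiff ℝ (⊤ : ℕ∞) (fun y : Fin (d+1) → ℝ => (if j = l then (1:ℝ) else 0) * (1 - ∑ k, y k) - y j) :=
  (contDiff_const.mul smooth_one_sub_sum).sub (contDiff_coord j)

lemma pd_C1 (i l : Fin (d+1)) (x : Fin (d+1) → ℝ) :
    pd i (fun y : Fin (d+1) → ℝ => (if j = l then (1:ℝ) else 0) * (1 - ∑ k, y k) - y j) x
      = -(if j = l then 1 else 0) - (if j = i then 1 else 0) := by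
  rw [pd_sub i x ((contDiff_const.mul smooth_one_sub_sum).differentiable (by simp) x)
    ((contDiff_coord j).differentiable (by simp) x),
    pd_const_mul i x _ ((smooth_one_sub_sum).differentiable (by simp) x),
    pd_one_sub_sum, pd_coord]
  ring

lemma ppH {f : (Fin (d+1) → ℝ) → ℝ} (hf : ContDiff ℝ (⊤ : ℕ∞) f) (i l : Fin (d+1))
    (x : Fin (d+1) → ℝ) :
    pd i (pd l (HopLast γ j f)) x
      = (-(if j = l then 1 else 0) - (if j = i then 1 else 0)) * pd j (pd j f) x
        + ((if j = l then 1 else 0) * (1 - ∑ k, x k) - x j) * pd i (pd j (pd j f)) x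
        + ((if j = i then 1 else 0) * (1 - ∑ k, x k) - x j) * pd l (pd j (pd j f)) x
        + Pf j x * pd i (pd l (pd j (pd j f))) x
        + (-(γ j.castSucc + 1) - (γ (Fin.last (d+1)) + 1) * (if j = l then 1 else 0))
            * pd i (pd j f) x
        + (-(γ j.castSucc + 1) - (γ (Fin.last (d+1)) + 1) * (if j = i then 1 else 0))
            * pd l (pd j f) x
        + Qf γ j x * pd i (pd l (pd j f)) x := by
  have hfun : pd l (HopLast γ j f)
      = fun y => ((if j = l then (1:ℝ) else 0) * (1 - ∑ k, y k) - y j) * pd j (pd j f) y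
        + (Pf j y * pd l (pd j (pd j f)) y
        + ((-(γ j.castSucc + 1) - (γ (Fin.last (d+1)) + 1) * (if j = l then 1 else 0))
            * pd j f y
        + Qf γ j y * pd l (pd j f) y)) := by
    funext y
    rw [pd_H γ j hf l y]
    ring
  rw [hfun]
  have s1 : ContDiff ℝ (⊤ : ℕ∞) (fun y : Fin (d+1) → ℝ =>
      ((if j = l then (1:ℝ) else 0) * (1 - ∑ k, y k) - y j) * pd j (pd j f) y) :=
    (smooth_C1 j l).mul (contDiff_pd j (contDiff_pd j hf))
  have s2 : ContDiff ℝ (⊤ : ℕ∞) (fun y => Pf j y * pd l (pd j (pd j f)) y) :=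
    (smooth_P j).mul (contDiff_pd l (contDiff_pd j (contDiff_pd j hf)))
  have s3 : ContDiff ℝ (⊤ : ℕ∞) (fun y : Fin (d+1) → ℝ =>
      (-(γ j.castSucc + 1) - (γ (Fin.last (d+1)) + 1) * (if j = l then 1 else 0))
        * pd j f y) := contDiff_const.mul (contDiff_pd j hf)
  have s4 : ContDiff ℝ (⊤ : ℕ∞) (fun y => Qf γ j y * pd l (pd j f) y) :=
    (smooth_Q γ j).mul (contDiff_pd l (contDiff_pd j hf))
  rw [pd_add i x (s1.differentiable (by simp) x) ((s2.add (s3.add s4)).differentiable (by simp) x),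
    pd_add i x (s2.differentiable (by simp) x) ((s3.add s4).differentiable (by simp) x),
    pd_add i x (s3.differentiable (by simp) x) (s4.differentiable (by simp) x),
    pd_mul i x ((smooth_C1 j l).differentiable (by simp) x)
      ((contDiff_pd j (contDiff_pd j hf)).differentiable (by simp) x),
    pd_mul i x ((smooth_P j).differentiable (by simp) x)
      ((contDiff_pd l (contDiff_pd j (contDiff_pd j hf))).differentiable (by simp) x),
    pd_const_mul i x _ ((contDiff_pd j hf).differentiable (by simp) x),
    pd_mul i x ((smooth_Q γ j).differentiable (by simp) x)
      ((contDiff_pd l (contDiff_pd j hf)).differentiable (by simp) x),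
    pd_C1 j i l x, pd_P j i x, pd_Q γ j i x]
  ring

lemma Mop_eq {f : (Fin (d+1) → ℝ) → ℝ} (hf : ContDiff ℝ (⊤ : ℕ∞) f) (x : Fin (d+1) → ℝ) :
    Mop γ f x = Mgen (fun i => γ i.castSucc + 1) ((∑ k, γ k) + ((d:ℝ)+1) + 1) f x := by
  have key : 2 * ∑ i : Fin (d+1), ∑ l ∈ Finset.Ioi i, x i * x l * pd i (pd l f) x
      = (∑ i, ∑ l, x i * x l * pd i (pd l f) x) - ∑ i, x i * x i * pd i (pd i f) x := by
    have h2 := Finset.sum_sum_Ioi_add_eq_sum_sum_off_diag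
      (fun a b => x a * x b * pd a (pd b f) x)
    have h1 : ∀ i : Fin (d+1), ∑ l ∈ Finset.Ioi i,
        (x l * x i * pd l (pd i f) x + x i * x l * pd i (pd l f) x)
        = 2 * ∑ l ∈ Finset.Ioi i, x i * x l * pd i (pd l f) x := by
      intro i
      rw [Finset.mul_sum]
      refine Finset.sum_congr rfl (fun l _ => ?_)
      rw [pd_comm l i hf]
      ring
    simp only [h1] at h2
    rw [← Finset.mul_sum] at h2
    simp only [Finset.compl_singleton,
      Finset.sum_erase_eq_sub (Finset.mem_univ _)] at h2
    rw [Finset.sum_sub_distrib] at h2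
    rw [show (∑ i : Fin (d+1), ∑ l : Fin (d+1), x l * x i * pd l (pd i f) x)
        = ∑ i : Fin (d+1), ∑ l : Fin (d+1), x i * x l * pd i (pd l f) x
      from Finset.sum_comm] at h2
    rw [h2]
  unfold Mop Mgen
  rw [key]
  have h3 : ∀ i : Fin (d+1), (1 - x i) * x i * pd i (pd i f) x
      = x i * pd i (pd i f) x - x i * x i * pd i (pd i f) x := fun i => by ring
  simp only [h3, Finset.sum_sub_distrib]
  ring

end Spec2
end PDtool

namespace PDtool
section Spec3
variable {d : ℕ} (γ : Fin (d+2) → ℝ) (j : Fin (d+1))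

lemma Hop_apply (f : (Fin (d+1) → ℝ) → ℝ) (x : Fin (d+1) → ℝ) :
    HopLast γ j f x = Pf j x * pd j (pd j f) x + Qf γ j x * pd j f x := rfl

lemma ppMgen (A : Fin (d+1) → ℝ) (c : ℝ) {f : (Fin (d+1) → ℝ) → ℝ}
    (hf : ContDiff ℝ (⊤ : ℕ∞) f) (x : Fin (d+1) → ℝ) :
    pd j (pd j (Mgen A c f)) x
      = Mgen A c (pd j (pd j f)) x + 2 * pd j (pd j (pd j f)) x
        - 2 * pd j (pd j f) x - 2 * c * pd j (pd j f) x
        - 4 * (∑ k, x k * pd k (pd j (pd j f)) x) := by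
  have hfun : pd j (Mgen A c f) = fun y =>
      Mgen A c (pd j f) y + pd j (pd j f) y - 2 * (∑ k, y k * pd k (pd j f) y)
        - c * pd j f y := funext (fun y => pd_Mgen A c hf j y)
  rw [hfun]
  have s1 : ContDiff ℝ (⊤ : ℕ∞) (Mgen A c (pd j f)) := smooth_Mgen A c (contDiff_pd j hf)
  have s2 : ContDiff ℝ (⊤ : ℕ∞) (pd j (pd j f)) := contDiff_pd j (contDiff_pd j hf)
  have s3 : ContDiff ℝ (⊤ : ℕ∞) (fun y => ∑ k, y k * pd k (pd j f) y) :=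
    ContDiff.sum fun k _ => (contDiff_coord k).mul (contDiff_pd k (contDiff_pd j hf))
  have s3' : ContDiff ℝ (⊤ : ℕ∞) (fun y => 2 * ∑ k, y k * pd k (pd j f) y) :=
    contDiff_const.mul s3
  have s4 : ContDiff ℝ (⊤ : ℕ∞) (fun y => c * pd j f y) :=
    contDiff_const.mul (contDiff_pd j hf)
  rw [pd_sub j x (((s1.add s2).sub s3').differentiable (by simp) x) (s4.differentiable (by simp) x),
    pd_sub j x ((s1.add s2).differentiable (by simp) x) (s3'.differentiable (by simp) x),
    pd_add j x (s1.differentiable (by simp) x) (s2.differentiable (by simp) x),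
    pd_Mgen A c (contDiff_pd j hf) j x,
    pd_const_mul j x 2 (s3.differentiable (by simp) x),
    pdS (contDiff_pd j hf) j x,
    pd_const_mul j x c ((contDiff_pd j hf).differentiable (by simp) x)]
  ring

lemma H_Mgen (A : Fin (d+1) → ℝ) (c : ℝ) {f : (Fin (d+1) → ℝ) → ℝ}
    (hf : ContDiff ℝ (⊤ : ℕ∞) f) (x : Fin (d+1) → ℝ) :
    HopLast γ j (Mgen A c f) x
      = Pf j x * (Mgen A c (pd j (pd j f)) x + 2 * pd j (pd j (pd j f)) x
          - 2 * pd j (pd j f) x - 2 * c * pd j (pd j f) x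
          - 4 * (∑ k, x k * pd k (pd j (pd j f)) x))
        + Qf γ j x * (Mgen A c (pd j f) x + pd j (pd j f) x
          - 2 * (∑ k, x k * pd k (pd j f) x) - c * pd j f x) := by
  rw [Hop_apply, ppMgen j A c hf x, pd_Mgen A c hf j x]

lemma E1 {f : (Fin (d+1) → ℝ) → ℝ} (hf : ContDiff ℝ (⊤ : ℕ∞) f) (x : Fin (d+1) → ℝ) :
    ∑ i, x i * pd i (pd i (HopLast γ j f)) x
      = x j * (-(2 * pd j (pd j f) x))
        + (1 - ∑ k, x k) * (x j * (2 * pd j (pd j (pd j f)) x))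
        + (∑ k, x k * pd k (pd j (pd j f)) x) * (-(2 * x j))
        + Pf j x * (∑ k, x k * pd k (pd k (pd j (pd j f))) x)
        + (∑ k, x k * pd k (pd j f) x) * (-(2 * (γ j.castSucc + 1)))
        + x j * pd j (pd j f) x * (-(2 * (γ (Fin.last (d+1)) + 1)))
        + Qf γ j x * (∑ k, x k * pd k (pd k (pd j f)) x) := by
  have h : ∀ i, x i * pd i (pd i (HopLast γ j f)) x
      = (if j = i then 1 else 0) * (x i * (-(2 * pd j (pd j f) x)))
        + (if j = i then 1 else 0)
            * ((1 - ∑ k, x k) * (x i * (2 * pd i (pd j (pd j f)) x)))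
        + (x i * pd i (pd j (pd j f)) x) * (-(2 * x j))
        + Pf j x * (x i * pd i (pd i (pd j (pd j f))) x)
        + (x i * pd i (pd j f) x) * (-(2 * (γ j.castSucc + 1)))
        + (if j = i then 1 else 0)
            * (x i * pd i (pd j f) x * (-(2 * (γ (Fin.last (d+1)) + 1))))
        + Qf γ j x * (x i * pd i (pd i (pd j f)) x) := by
    intro i; rw [ppH γ j hf i i x]; ring
  simp only [h, Finset.sum_add_distrib, sum_delta_mul, ← Finset.sum_mul, ← Finset.mul_sum]

lemma E3 (c : ℝ) {f : (Fin (d+1) → ℝ) → ℝ} (hf : ContDiff ℝ (⊤ : ℕ∞) f) (x : Fin (d+1) → ℝ) :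
    ∑ i, ((γ i.castSucc + 1) - c * x i) * pd i (HopLast γ j f) x
      = ((γ j.castSucc + 1) - c * x j) * ((1 - ∑ k, x k) * pd j (pd j f) x)
        + (∑ i, ((γ i.castSucc + 1) - c * x i)) * (-(x j) * pd j (pd j f) x)
        + Pf j x * (∑ i, ((γ i.castSucc + 1) - c * x i) * pd i (pd j (pd j f)) x)
        + (∑ i, ((γ i.castSucc + 1) - c * x i)) * (-(γ j.castSucc + 1) * pd j f x)
        + ((γ j.castSucc + 1) - c * x j)
            * (-(γ (Fin.last (d+1)) + 1) * pd j f x)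
        + Qf γ j x * (∑ i, ((γ i.castSucc + 1) - c * x i) * pd i (pd j f) x) := by
  have h : ∀ i, ((γ i.castSucc + 1) - c * x i) * pd i (HopLast γ j f) x
      = (if j = i then 1 else 0)
            * (((γ i.castSucc + 1) - c * x i) * ((1 - ∑ k, x k) * pd j (pd j f) x))
        + ((γ i.castSucc + 1) - c * x i) * (-(x j) * pd j (pd j f) x)
        + Pf j x * (((γ i.castSucc + 1) - c * x i) * pd i (pd j (pd j f)) x)
        + ((γ i.castSucc + 1) - c * x i) * (-(γ j.castSucc + 1) * pd j f x)
        + (if j = i then 1 else 0)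
            * (((γ i.castSucc + 1) - c * x i)
                * (-(γ (Fin.last (d+1)) + 1) * pd j f x))
        + Qf γ j x * (((γ i.castSucc + 1) - c * x i) * pd i (pd j f) x) := by
    intro i; rw [pd_H γ j hf i x]; ring
  simp only [h, Finset.sum_add_distrib, sum_delta_mul, ← Finset.sum_mul, ← Finset.mul_sum]

lemma E2 {f : (Fin (d+1) → ℝ) → ℝ} (hf : ContDiff ℝ (⊤ : ℕ∞) f) (x : Fin (d+1) → ℝ) :
    ∑ i, ∑ l, x i * x l * pd i (pd l (HopLast γ j f)) x
      = ((∑ k, x k) * (-(pd j (pd j f) x))) * x j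
        + x j * ((∑ k, x k) * (-(pd j (pd j f) x)))
        + (∑ k, x k * pd k (pd j (pd j f)) x) * (x j * (1 - ∑ k, x k))
        + (∑ k, x k * pd k (pd j (pd j f)) x) * ((∑ k, x k) * (-(x j)))
        + (x j * (1 - ∑ k, x k)) * (∑ k, x k * pd k (pd j (pd j f)) x)
        + ((∑ k, x k) * (-(x j))) * (∑ k, x k * pd k (pd j (pd j f)) x)
        + Pf j x * (∑ k, ∑ l, x k * x l * pd k (pd l (pd j (pd j f))) x)
        + (∑ k, x k * pd k (pd j f) x) * ((∑ k, x k) * (-(γ j.castSucc + 1)))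
        + (∑ k, x k * pd k (pd j f) x) * (x j * (-(γ (Fin.last (d+1)) + 1)))
        + ((∑ k, x k) * (-(γ j.castSucc + 1))) * (∑ k, x k * pd k (pd j f) x)
        + (x j * (-(γ (Fin.last (d+1)) + 1))) * (∑ k, x k * pd k (pd j f) x)
        + Qf γ j x * (∑ k, ∑ l, x k * x l * pd k (pd l (pd j f)) x) := by
  have h : ∀ i l, x i * x l * pd i (pd l (HopLast γ j f)) x
      = (x i * (-(pd j (pd j f) x))) * ((if j = l then 1 else 0) * x l)
        + ((if j = i then 1 else 0) * x i) * (x l * (-(pd j (pd j f) x)))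
        + (x i * pd i (pd j (pd j f)) x)
            * ((if j = l then 1 else 0) * (x l * (1 - ∑ k, x k)))
        + (x i * pd i (pd j (pd j f)) x) * (x l * (-(x j)))
        + ((if j = i then 1 else 0) * (x i * (1 - ∑ k, x k)))
            * (x l * pd l (pd j (pd j f)) x)
        + (x i * (-(x j))) * (x l * pd l (pd j (pd j f)) x)
        + Pf j x * (x i * x l * pd i (pd l (pd j (pd j f))) x)
        + (x i * pd i (pd j f) x) * (x l * (-(γ j.castSucc + 1)))
        + (x i * pd i (pd j f) x)
            * ((if j = l then 1 else 0) * (x l * (-(γ (Fin.last (d+1)) + 1))))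
        + (x i * (-(γ j.castSucc + 1))) * (x l * pd l (pd j f) x)
        + ((if j = i then 1 else 0) * (x i * (-(γ (Fin.last (d+1)) + 1))))
            * (x l * pd l (pd j f) x)
        + Qf γ j x * (x i * x l * pd i (pd l (pd j f)) x) := by
    intro i l; rw [ppH γ j hf i l x]; ring
  simp only [h, Finset.sum_add_distrib, ← Finset.mul_sum, ← Finset.sum_mul, sum_delta_mul]

end Spec3
end PDtool


open PDtool

/-- For `1 ≤ j ≤ d`, the operator `Ĥ_{j,d+1}` commutes with the Appell–Lauricella
operator `M_d^γ`. (The paper's dimension `d ≥ 1` is Lean's `d+1`.) -/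
theorem statement15 (d : ℕ) (γ : Fin (d + 2) → ℝ) (j : Fin (d + 1))
    (f : (Fin (d + 1) → ℝ) → ℝ) (hf : ContDiff ℝ (⊤ : ℕ∞) f) (x : Fin (d + 1) → ℝ) :
    Mop γ (HopLast γ j f) x = HopLast γ j (Mop γ f) x := by
  have hMfun : Mop γ f
      = Mgen (fun i => γ i.castSucc + 1) ((∑ k, γ k) + ((d:ℝ)+1) + 1) f :=
    funext (fun y => Mop_eq γ hf y)
  rw [Mop_eq γ (smooth_H γ j hf) x, hMfun,
    H_Mgen γ j (fun i => γ i.castSucc + 1) ((∑ k, γ k) + ((d:ℝ)+1) + 1) hf x]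
  show (∑ i, x i * pd i (pd i (HopLast γ j f)) x)
      - (∑ i, ∑ l, x i * x l * pd i (pd l (HopLast γ j f)) x)
      + (∑ i, ((γ i.castSucc + 1) - ((∑ k, γ k) + ((d:ℝ)+1) + 1) * x i)
          * pd i (HopLast γ j f) x) = _
  rw [E1 γ j hf x, E2 γ j hf x, E3 γ j ((∑ k, γ k) + ((d:ℝ)+1) + 1) hf x]
  have hsum : ∑ i : Fin (d+1), ((γ i.castSucc + 1)
        - ((∑ k, γ k) + ((d:ℝ)+1) + 1) * x i)
      = (∑ i : Fin (d+1), (γ i.castSucc + 1))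
        - ((∑ k, γ k) + ((d:ℝ)+1) + 1) * ∑ k, x k := by
    rw [Finset.sum_sub_distrib]
    congr 1
    rw [Finset.mul_sum]
  rw [hsum]
  have hc : (∑ k, γ k) + ((d:ℝ)+1) + 1
      = (∑ i : Fin (d+1), (γ i.castSucc + 1)) + (γ (Fin.last (d+1)) + 1) := by
    rw [Fin.sum_univ_castSucc (fun k => γ k), Finset.sum_add_distrib]
    simp
    ring
  simp only [Mgen, Pf, Qf]
  linear_combination (x j * pd j (pd j f) x + (γ j.castSucc + 1) * pd j f x) * hc
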